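/- If Q ∈ S₀ is uniaxial with nonnegative scalar order parameter, Q = s(n⊗n − I/3) with s ≥ 0, then √6·tr Q³ = |Q|³ and β²(Q) = 0; conversely, if Q ≠ 0 satisfies √6·tr Q³ = |Q|³, then Q is uniaxial with positive scalar order parameter. -/

import Mathlib

/-!
Diagonalize `Q = U diag(λ) Uᵀ`. Then `∑ λᵢ = 0`, `|Q|² = ∑ λᵢ²` and `tr Q³ = ∑ λᵢ³`, and for a
traceless triple `(∑ λᵢ²)³ - 6 (∑ λᵢ³)² = 2 ((λ₀ - λ₁)(λ₁ - λ₂)(λ₂ - λ₀))²`. So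
`√6 tr Q³ = |Q|³` forces two equal eigenvalues `t`, the third being `-2t`; `tr Q³ = -6t³ ≥ 0`
and `Q ≠ 0` give `t < 0`, and `Q = s (n ⊗ n - I/3)` with `s = -3t` and `n` the eigenvector of the
simple eigenvalue. Conversely `|s (n ⊗ n - I/3)|² = 2s²/3` and `tr (s (n ⊗ n - I/3))³ = 2s³/9`.
-/

open Matrix

noncomputable section

abbrev Mat3 := Matrix (Fin 3) (Fin 3) ℝ

def S0 (Q : Mat3) : Prop := Q.IsSymm ∧ Q.trace = 0

def nsq (Q : Mat3) : ℝ := Matrix.trace (Q * Q)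

def tr3 (Q : Mat3) : ℝ := Matrix.trace (Q * Q * Q)

def normQ (Q : Mat3) : ℝ := Real.sqrt (nsq Q)

def betaSq (Q : Mat3) : ℝ := 1 - 6 * (tr3 Q) ^ 2 / (nsq Q) ^ 3

def unitVec (n : Fin 3 → ℝ) : Prop := ∑ i, (n i) ^ 2 = 1

def uni (s : ℝ) (n : Fin 3 → ℝ) : Mat3 :=
  s • (Matrix.vecMulVec n n - (1 / 3 : ℝ) • (1 : Mat3))

open Unitary

lemma Matrix.trace_conjStarAlgAut {n R : Type*} [Fintype n] [DecidableEq n] [CommRing R]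
    [StarRing R] (u : unitary (Matrix n n R)) (A : Matrix n n R) :
    (conjStarAlgAut R _ u A).trace = A.trace := by
  rw [conjStarAlgAut_apply, trace_mul_cycle, coe_star_mul_self, one_mul]

lemma Matrix.IsHermitian.trace_pow_eq_sum_eigenvalues_pow {n 𝕜 : Type*} [Fintype n]
    [DecidableEq n] [RCLike 𝕜] {A : Matrix n n 𝕜} (hA : A.IsHermitian) (k : ℕ) :
    (A ^ k).trace = ∑ i, (hA.eigenvalues i : 𝕜) ^ k := by
  conv_lhs => rw [hA.spectral_theorem]
  rw [← map_pow, trace_conjStarAlgAut, diagonal_pow, trace_diagonal]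
  rfl

lemma Matrix.mul_diagonal_single_mul_conjTranspose {n R : Type*} [Fintype n] [DecidableEq n]
    [CommSemiring R] [StarRing R] (A : Matrix n n R) (k : n) :
    A * diagonal (Pi.single k 1) * Aᴴ = vecMulVec (A.col k) (star (A.col k)) := by
  ext i j
  simp [mul_apply, diagonal, Pi.single_apply, vecMulVec_apply]

lemma unitVec_col (U : unitary Mat3) (k : Fin 3) : unitVec ((U : Mat3).col k) := by
  have h := congrFun (congrFun (coe_star_mul_self U) k) k
  simpa [unitVec, mul_apply, sq] using h

lemma conjStarAlgAut_diagonal_eq_uni (U : unitary Mat3) (s : ℝ) (k : Fin 3) :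
    conjStarAlgAut ℝ _ U (diagonal (s • (Pi.single k 1 - (1 / 3 : ℝ) • 1))) =
      uni s ((U : Mat3).col k) := by
  have hdiag : diagonal (Pi.single k 1 - (1 / 3 : ℝ) • (1 : Fin 3 → ℝ)) =
      diagonal (Pi.single k 1) - (1 / 3 : ℝ) • (1 : Mat3) := by
    rw [← diagonal_one, ← diagonal_smul, diagonal_sub]; rfl
  rw [diagonal_smul, hdiag, map_smul, map_sub, map_smul, map_one, conjStarAlgAut_apply,
    star_eq_conjTranspose, mul_diagonal_single_mul_conjTranspose, star_trivial, uni]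

lemma nsq_uni (s : ℝ) {n : Fin 3 → ℝ} (hn : unitVec n) : nsq (uni s n) = 2 / 3 * s ^ 2 := by
  have h : n 0 ^ 2 + n 1 ^ 2 + n 2 ^ 2 = 1 := by simpa [unitVec, Fin.sum_univ_three] using hn
  simp only [nsq, uni, trace, diag, mul_apply, Matrix.smul_apply, Matrix.sub_apply,
    vecMulVec_apply, one_apply, Fin.sum_univ_three, smul_eq_mul, Fin.reduceEq, reduceIte]
  linear_combination s ^ 2 * (n 0 ^ 2 + n 1 ^ 2 + n 2 ^ 2 + 1 / 3) * h

lemma tr3_uni (s : ℝ) {n : Fin 3 → ℝ} (hn : unitVec n) : tr3 (uni s n) = 2 / 9 * s ^ 3 := by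
  have h : n 0 ^ 2 + n 1 ^ 2 + n 2 ^ 2 = 1 := by simpa [unitVec, Fin.sum_univ_three] using hn
  simp only [tr3, uni, trace, diag, mul_apply, Matrix.smul_apply, Matrix.sub_apply,
    vecMulVec_apply, one_apply, Fin.sum_univ_three, smul_eq_mul, Fin.reduceEq, reduceIte]
  linear_combination s ^ 3 * ((n 0 ^ 2 + n 1 ^ 2 + n 2 ^ 2) ^ 2 + 1 / 3) * h

lemma nsq_eq_sum_eigenvalues_sq {Q : Mat3} (hQ : Q.IsHermitian) :
    nsq Q = ∑ i, hQ.eigenvalues i ^ 2 := by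
  simpa [nsq, ← sq] using hQ.trace_pow_eq_sum_eigenvalues_pow 2

lemma tr3_eq_sum_eigenvalues_pow_three {Q : Mat3} (hQ : Q.IsHermitian) :
    tr3 Q = ∑ i, hQ.eigenvalues i ^ 3 := by
  simpa [tr3, ← pow_three'] using hQ.trace_pow_eq_sum_eigenvalues_pow 3

lemma sqrt_six_mul_eq_sqrt_pow_three_iff {t p : ℝ} (hp : 0 ≤ p) :
    √6 * t = √p ^ 3 ↔ 0 ≤ t ∧ 6 * t ^ 2 = p ^ 3 := by
  have hl : (√6 * t) ^ 2 = 6 * t ^ 2 := by rw [mul_pow, Real.sq_sqrt (by norm_num)]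
  have hr : (√p ^ 3) ^ 2 = p ^ 3 := by rw [← pow_mul, mul_comm, pow_mul, Real.sq_sqrt hp]
  constructor
  · intro h
    have hpow : 0 ≤ √6 * t := h ▸ pow_nonneg (Real.sqrt_nonneg p) 3
    refine ⟨(mul_nonneg_iff_of_pos_left (by positivity)).1 hpow, ?_⟩
    rw [← hl, h, hr]
  · rintro ⟨ht, h⟩
    rw [← sq_eq_sq₀ (by positivity) (by positivity), hl, hr, h]

lemma exists_pos_eq_uniaxial_of_forall_ne {lam : Fin 3 → ℝ} {k : Fin 3} {t : ℝ}
    (hoff : ∀ i ≠ k, lam i = t) (htr : ∑ i, lam i = 0) (hcube : 0 ≤ ∑ i, lam i ^ 3)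
    (hne : lam ≠ 0) :
    ∃ s : ℝ, 0 < s ∧ lam = s • (Pi.single k 1 - (1 / 3 : ℝ) • 1) := by
  have hsum : ∀ f : ℝ → ℝ, ∑ i, f (lam i) = f (lam k) + 2 * f t := by
    intro f
    rw [Fintype.sum_eq_add_sum_compl k,
      Finset.sum_congr (g := fun _ => f t) rfl fun i hi => by rw [hoff i (by simpa using hi)]]
    simp [Finset.card_compl]
  have hk : lam k = -2 * t := by linarith [hsum fun x => x]
  have ht : t ≠ 0 := by
    rintro rfl
    refine hne (funext fun i => ?_)
    by_cases hi : i = k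
    · simp [hi, hk]
    · exact hoff i hi
  have hneg : t < 0 := by
    have hcube' : t ^ 3 ≤ 0 := by
      have h := hsum (· ^ 3)
      rw [hk] at h
      linarith
    exact lt_of_le_of_ne ((Odd.pow_nonpos_iff (by decide)).mp hcube') ht
  refine ⟨-3 * t, by linarith, funext fun i => ?_⟩
  by_cases hi : i = k
  · subst hi
    simp only [Pi.smul_apply, Pi.sub_apply, Pi.one_apply, smul_eq_mul, Pi.single_eq_same, hk]
    ring
  · simp only [Pi.smul_apply, Pi.sub_apply, Pi.one_apply, smul_eq_mul, Pi.single_eq_of_ne hi,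
      hoff i hi]
    ring

lemma exists_pos_eq_uniaxial {lam : Fin 3 → ℝ} (htr : ∑ i, lam i = 0)
    (hcube : 0 ≤ ∑ i, lam i ^ 3) (hne : lam ≠ 0)
    (hdisc : 6 * (∑ i, lam i ^ 3) ^ 2 = (∑ i, lam i ^ 2) ^ 3) :
    ∃ k : Fin 3, ∃ s : ℝ, 0 < s ∧ lam = s • (Pi.single k 1 - (1 / 3 : ℝ) • 1) := by
  have h2 : lam 2 = -lam 0 - lam 1 := by
    rw [Fin.sum_univ_three] at htr; linarith
  have hvdm : ((lam 0 - lam 1) * (lam 1 - lam 2) * (lam 2 - lam 0)) ^ 2 = 0 := by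
    simp only [Fin.sum_univ_three, h2] at hdisc
    rw [h2]
    linear_combination (-1 / 2 : ℝ) * hdisc
  rcases mul_eq_zero.mp (pow_eq_zero_iff two_ne_zero |>.mp hvdm) with h | h
  · rcases mul_eq_zero.mp h with h | h
    · exact ⟨2, exists_pos_eq_uniaxial_of_forall_ne (t := lam 0)
        (by intro i hi; fin_cases i <;> simp at hi ⊢; linarith) htr hcube hne⟩
    · exact ⟨0, exists_pos_eq_uniaxial_of_forall_ne (t := lam 1)
        (by intro i hi; fin_cases i <;> simp at hi ⊢; linarith) htr hcube hne⟩
  · exact ⟨1, exists_pos_eq_uniaxial_of_forall_ne (t := lam 0)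
      (by intro i hi; fin_cases i <;> simp at hi ⊢; linarith) htr hcube hne⟩

theorem stmt18 (Q : Mat3) (hQ : S0 Q) :
    ((∃ (s : ℝ) (n : Fin 3 → ℝ), 0 ≤ s ∧ unitVec n ∧ Q = uni s n) →
      Real.sqrt 6 * tr3 Q = (normQ Q) ^ 3 ∧ (Q ≠ 0 → betaSq Q = 0)) ∧
    (Q ≠ 0 → Real.sqrt 6 * tr3 Q = (normQ Q) ^ 3 →
      ∃ (s : ℝ) (n : Fin 3 → ℝ), 0 < s ∧ unitVec n ∧ Q = uni s n) := by
  refine ⟨?_, fun hQ0 hQeq => ?_⟩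
  · rintro ⟨s, n, hs, hn, rfl⟩
    have hdisc : 6 * tr3 (uni s n) ^ 2 = nsq (uni s n) ^ 3 := by
      rw [nsq_uni s hn, tr3_uni s hn]; ring
    refine ⟨(sqrt_six_mul_eq_sqrt_pow_three_iff (by rw [nsq_uni s hn]; positivity)).2
      ⟨by rw [tr3_uni s hn]; positivity, hdisc⟩, fun hne => ?_⟩
    have hs0 : s ≠ 0 := by rintro rfl; simp [uni] at hne
    rw [betaSq, hdisc, div_self (by rw [nsq_uni s hn]; positivity), sub_self]
  · have hH : Q.IsHermitian := isHermitian_iff_isSymm.mpr hQ.1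
    rw [normQ, nsq_eq_sum_eigenvalues_sq hH, tr3_eq_sum_eigenvalues_pow_three hH,
      sqrt_six_mul_eq_sqrt_pow_three_iff (by positivity)] at hQeq
    obtain ⟨k, s, hs, hlam⟩ := exists_pos_eq_uniaxial
      (by simpa [hQ.2] using (hH.trace_pow_eq_sum_eigenvalues_pow 1).symm) hQeq.1
      (mt hH.eigenvalues_eq_zero_iff.mp hQ0) hQeq.2
    refine ⟨s, _, hs, unitVec_col hH.eigenvectorUnitary k, ?_⟩
    rw [← conjStarAlgAut_diagonal_eq_uni, ← hlam]
    simpa using hH.spectral_theorem
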